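/- Let B : ℝ^m ⇒ ℝ^m be a set-valued operator such that zer(B) ≠ ∅ and J_B(x) ≠ ∅ for every x ∈ ℝ^m, and suppose that, for some symmetric positive definite matrix Ψ ∈ ℝ^{m×m} and some μ̃ > 0, B is μ̃-restricted strongly monotone with respect to zer(B) in the Ψ-induced space. Then zer(B) consists of exactly one point z, and every sequence (ω^k)_{k∈ℕ} in ℝ^m satisfying ω^{k+1} ∈ J_B(ω^k) for all k converges to z with linear rate: ‖ω^k − z‖_Ψ ≤ (1/(1+μ̃))^k · ‖ω^0 − z‖_Ψ for all k ∈ ℕ. -/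

import Mathlib

/-! Writing `Ψ = S²` with `S = √Ψ` symmetric, `⟨x, y⟩_Ψ = ⟪S x, S y⟫`, so Cauchy–Schwarz holds in
the `Ψ`-geometry. Restricted strong monotonicity, tested at `(ω^{k+1}, ω^k - ω^{k+1})` against
`(z, 0)`, gives `(1 + μ̃) ‖ω^{k+1} - z‖²_Ψ ≤ ⟨ω^{k+1} - z, ω^k - z⟩_Ψ ≤ ‖ω^{k+1} - z‖_Ψ ‖ω^k - z‖_Ψ`,
a contraction by `1 / (1 + μ̃)`; tested at two zeros of `B` it forces them to coincide. -/

open scoped InnerProductSpace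

/-- Conversion of a plain vector into `EuclideanSpace ℝ (Fin m)`. -/
noncomputable def toE {m : ℕ} (v : Fin m → ℝ) : EuclideanSpace ℝ (Fin m) :=
  (WithLp.equiv 2 _).symm v

/-- The Ψ-weighted inner product `⟪x, y⟫_Ψ := ⟪Ψ x, y⟫`. -/
noncomputable def wip {m : ℕ} (Ψ : Matrix (Fin m) (Fin m) ℝ)
    (x y : EuclideanSpace ℝ (Fin m)) : ℝ :=
  ⟪toE (Ψ.mulVec x), y⟫_ℝ

/-- The Ψ-weighted norm `‖x‖_Ψ := √⟪Ψ x, x⟫`. -/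
noncomputable def wnorm {m : ℕ} (Ψ : Matrix (Fin m) (Fin m) ℝ)
    (x : EuclideanSpace ℝ (Fin m)) : ℝ :=
  Real.sqrt (wip Ψ x x)

open scoped MatrixOrder
open Matrix

theorem norm_le_of_mul_norm_sq_le_inner_sub {E : Type*} [NormedAddCommGroup E]
    [InnerProductSpace ℝ E] {μ : ℝ} (hμ : 0 < 1 + μ) {a b : E}
    (h : μ * ‖a‖ ^ 2 ≤ ⟪a, b - a⟫_ℝ) : ‖a‖ ≤ 1 / (1 + μ) * ‖b‖ := by
  have hab : (1 + μ) * ‖a‖ ^ 2 ≤ ‖a‖ * ‖b‖ := by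
    rw [inner_sub_right, real_inner_self_eq_norm_sq] at h
    linarith [real_inner_le_norm a b]
  rw [div_mul_eq_mul_div, one_mul, le_div_iff₀ hμ]
  rcases (norm_nonneg a).eq_or_lt with ha | ha
  · rw [← ha]; simp
  · nlinarith

section WeightedGeometry

variable {m : ℕ} {Ψ : Matrix (Fin m) (Fin m) ℝ}

lemma wip_eq_inner_sqrt (hΨ : Ψ.PosSemidef) (x y : EuclideanSpace ℝ (Fin m)) :
    wip Ψ x y = ⟪toEuclideanLin (CFC.sqrt Ψ) x, toEuclideanLin (CFC.sqrt Ψ) y⟫_ℝ := by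
  have hS : (CFC.sqrt Ψ).toEuclideanLin.IsSymmetric :=
    isSymmetric_toEuclideanLin_iff.mpr (CFC.sqrt_nonneg Ψ).posSemidef.isHermitian
  have hΨx : Ψ *ᵥ x = CFC.sqrt Ψ *ᵥ (CFC.sqrt Ψ *ᵥ x) := by
    rw [mulVec_mulVec, CFC.sqrt_mul_sqrt_self Ψ hΨ.nonneg]
  rw [← hS, wip, hΨx]
  rfl

lemma wnorm_eq_norm_sqrt (hΨ : Ψ.PosSemidef) (x : EuclideanSpace ℝ (Fin m)) :
    wnorm Ψ x = ‖toEuclideanLin (CFC.sqrt Ψ) x‖ := by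
  rw [wnorm, wip_eq_inner_sqrt hΨ, real_inner_self_eq_norm_sq, Real.sqrt_sq (norm_nonneg _)]

lemma wnorm_le_of_mul_wnorm_sq_le_wip_sub (hΨ : Ψ.PosSemidef) {μ : ℝ} (hμ : 0 < 1 + μ)
    {a b : EuclideanSpace ℝ (Fin m)} (h : μ * wnorm Ψ a ^ 2 ≤ wip Ψ a (b - a)) :
    wnorm Ψ a ≤ 1 / (1 + μ) * wnorm Ψ b := by
  simp only [wnorm_eq_norm_sqrt hΨ, wip_eq_inner_sqrt hΨ, map_sub] at h ⊢
  exact norm_le_of_mul_norm_sq_le_inner_sub hμ h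

lemma wip_zero_right (x : EuclideanSpace ℝ (Fin m)) : wip Ψ x 0 = 0 :=
  inner_zero_right _

lemma wnorm_pos (hΨ : Ψ.PosDef) {x : EuclideanSpace ℝ (Fin m)} (hx : x ≠ 0) : 0 < wnorm Ψ x := by
  refine Real.sqrt_pos.mpr ?_
  have hquad := hΨ.dotProduct_mulVec_pos (x := x.ofLp) (by simpa using hx)
  rw [wip, EuclideanSpace.inner_eq_star_dotProduct]
  simpa [toE, dotProduct_comm] using hquad

end WeightedGeometry

theorem stmt0_general {m : ℕ}
    (B : EuclideanSpace ℝ (Fin m) → Set (EuclideanSpace ℝ (Fin m)))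
    (Ψ : Matrix (Fin m) (Fin m) ℝ) (hΨpd : Ψ.PosDef)
    (μt : ℝ) (hμt : 0 < μt)
    (hzer : ∃ z, (0 : EuclideanSpace ℝ (Fin m)) ∈ B z)
    (hmon : ∀ x u z v, u ∈ B x → v ∈ B z →
      (0 : EuclideanSpace ℝ (Fin m)) ∈ B z →
      wip Ψ (x - z) (u - v) ≥ μt * (wnorm Ψ (x - z)) ^ 2) :
    ∃ z, (0 : EuclideanSpace ℝ (Fin m)) ∈ B z ∧
      (∀ z', (0 : EuclideanSpace ℝ (Fin m)) ∈ B z' → z' = z) ∧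
      ∀ ω : ℕ → EuclideanSpace ℝ (Fin m),
        (∀ k : ℕ, ω k - ω (k + 1) ∈ B (ω (k + 1))) →
        ∀ k : ℕ, wnorm Ψ (ω k - z) ≤ (1 / (1 + μt)) ^ k * wnorm Ψ (ω 0 - z) := by
  obtain ⟨z, hz⟩ := hzer
  refine ⟨z, hz, fun z' hz' => ?_, fun ω hω k => ?_⟩
  · have h := hmon z' 0 z 0 hz' hz hz
    rw [sub_zero, wip_zero_right] at h
    by_contra hne
    have hpos := wnorm_pos hΨpd (sub_ne_zero.mpr hne)
    linarith [mul_pos hμt (pow_pos hpos 2)]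
  · refine le_geom (u := fun j => wnorm Ψ (ω j - z)) (one_div_nonneg.mpr (by linarith)) k
      fun j _ => wnorm_le_of_mul_wnorm_sq_le_wip_sub hΨpd.posSemidef (by linarith) ?_
    simpa only [sub_zero, sub_sub_sub_cancel_right] using hmon _ _ z 0 (hω j) hz hz

/-- Theorem 1 of the paper. Let `B : ℝ^m ⇒ ℝ^m` be a set-valued operator
with `zer(B) ≠ ∅` and `J_B(x) ≠ ∅` for every `x` (recall `y ∈ J_B(x) ↔ x - y ∈ B(y)`), and
suppose `B` is `μ̃`-restricted strongly monotone w.r.t. `zer(B)` in the `Ψ`-induced space,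
for a symmetric positive definite `Ψ` and `μ̃ > 0`. Then `zer(B)` is a singleton `{z}` and
every proximal-point sequence `ω^{k+1} ∈ J_B(ω^k)` converges to `z` with linear rate
`‖ω^k − z‖_Ψ ≤ (1/(1+μ̃))^k ‖ω^0 − z‖_Ψ`. -/
theorem stmt0 {m : ℕ}
    (B : EuclideanSpace ℝ (Fin m) → Set (EuclideanSpace ℝ (Fin m)))
    (Ψ : Matrix (Fin m) (Fin m) ℝ) (hΨsymm : Ψ.IsSymm) (hΨpd : Ψ.PosDef)
    (μt : ℝ) (hμt : 0 < μt)
    (hzer : ∃ z, (0 : EuclideanSpace ℝ (Fin m)) ∈ B z)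
    (hdom : ∀ x, ∃ y, x - y ∈ B y)
    (hmon : ∀ x u z v, u ∈ B x → v ∈ B z →
      (0 : EuclideanSpace ℝ (Fin m)) ∈ B z →
      wip Ψ (x - z) (u - v) ≥ μt * (wnorm Ψ (x - z)) ^ 2) :
    ∃ z, (0 : EuclideanSpace ℝ (Fin m)) ∈ B z ∧
      (∀ z', (0 : EuclideanSpace ℝ (Fin m)) ∈ B z' → z' = z) ∧
      ∀ ω : ℕ → EuclideanSpace ℝ (Fin m),
        (∀ k : ℕ, ω k - ω (k + 1) ∈ B (ω (k + 1))) →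
        ∀ k : ℕ, wnorm Ψ (ω k - z) ≤ (1 / (1 + μt)) ^ k * wnorm Ψ (ω 0 - z) :=
  stmt0_general B Ψ hΨpd μt hμt hzer hmon
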